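/- Let N be a phylogenetic network on X and let T be a rooted binary phylogenetic X-tree having a cherry {a, b}. If {a, b} is also a cherry in N, let N' and T' be obtained from N and T respectively by deleting leaf b and its incident arc and contracting the resulting degree-two vertex. Then N displays T if and only if N' displays T'. -/

import Mathlib

/-- A directed graph with a distinguished vertex set, arc set and root,
intended to model (binary) phylogenetic networks. Since arcs form a
`Finset` of ordered pairs, there are no parallel arcs. -/
structure Net (V : Type) [DecidableEq V] where
  verts : Finset V
  arcs : Finset (V × V)
  root : V

variable {V : Type} [DecidableEq V]

namespace Net

def Arc (N : Net V) (u v : V) : Prop := (u, v) ∈ N.arcs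

def outdeg (N : Net V) (v : V) : ℕ := (N.arcs.filter (fun e => e.1 = v)).card

def indeg (N : Net V) (v : V) : ℕ := (N.arcs.filter (fun e => e.2 = v)).card

def IsLeaf (N : Net V) (v : V) : Prop := v ∈ N.verts ∧ N.outdeg v = 0

def IsRetic (N : Net V) (v : V) : Prop :=
  v ∈ N.verts ∧ N.indeg v = 2 ∧ N.outdeg v = 1

def IsTreeVtx (N : Net V) (v : V) : Prop :=
  v ∈ N.verts ∧ N.indeg v = 1 ∧ N.outdeg v = 2

/-- The set of leaves (out-degree-zero vertices); this is the taxa set `X`. -/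
def leaves (N : Net V) : Finset V := N.verts.filter (fun v => N.outdeg v = 0)

/-- The set of reticulation vertices. -/
def retics (N : Net V) : Finset V :=
  N.verts.filter (fun v => N.indeg v = 2 ∧ N.outdeg v = 1)

/-- `u` is an ancestor of `v`: there is a directed path from `u` to `v`.
(Reflexive, as in the reachability order.) -/
def Ancestor (N : Net V) (u v : V) : Prop := Relation.ReflTransGen N.Arc u v

/-- `IsPathList N u v l` : `l` is the list of vertices of a directed path
from `u` to `v` in `N`. -/
inductive IsPathList (N : Net V) : V → V → List V → Prop
  | nil (v : V) : IsPathList N v v [v]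
  | cons {u w x : V} {l : List V} : N.Arc u w → IsPathList N w x l →
      IsPathList N u x (u :: l)

/-- The leaf `ℓ` verifies the vertex `v`: every directed path from the root
to `ℓ` passes through `v`. -/
def Verifies (N : Net V) (ℓ v : V) : Prop :=
  ∀ l : List V, N.IsPathList N.root ℓ l → v ∈ l

def Visible (N : Net V) (v : V) : Prop := ∃ ℓ, N.IsLeaf ℓ ∧ N.Verifies ℓ v

def ReticVisible (N : Net V) : Prop := ∀ v, N.IsRetic v → N.Visible v

/-- `N` is a (binary) phylogenetic network: a rooted acyclic digraph with no
parallel arcs in which the root has in-degree zero and out-degree two, every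
other vertex is a leaf (in-degree one, out-degree zero), a tree vertex
(in-degree one, out-degree two) or a reticulation (in-degree two, out-degree
one); if there is a single vertex the network has no arcs. -/
def IsPhylo (N : Net V) : Prop :=
  N.root ∈ N.verts ∧
  (∀ e ∈ N.arcs, e.1 ∈ N.verts ∧ e.2 ∈ N.verts) ∧
  (∀ v : V, ¬ Relation.TransGen N.Arc v v) ∧
  (∀ v ∈ N.verts, N.Ancestor N.root v) ∧
  (if N.verts.card = 1 then N.arcs = ∅
   else
    N.indeg N.root = 0 ∧ N.outdeg N.root = 2 ∧
    ∀ v ∈ N.verts, v ≠ N.root →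
      (N.indeg v = 1 ∧ N.outdeg v = 0) ∨
      (N.indeg v = 1 ∧ N.outdeg v = 2) ∨
      (N.indeg v = 2 ∧ N.outdeg v = 1))

end Net

/-- The internal vertices of a path given as a list of vertices. -/
def internalVerts {V : Type} (l : List V) : List V := (l.drop 1).dropLast

/-- `N.Displays T corr` : some subgraph of `N` is a subdivision of `T`; it is
witnessed by an embedding `f` of the vertices of `T` into `N` (with each leaf
`w` of `T` sent to a vertex related to it by the leaf correspondence `corr`)
together with, for every arc `e` of `T`, a directed path `P e` in `N` joining
the images of its endpoints, these paths being internally disjoint from one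
another and from the images of the vertices of `T`. -/
def Net.Displays {V W : Type} [DecidableEq V] [DecidableEq W]
    (N : Net V) (T : Net W) (corr : W → V → Prop) : Prop :=
  ∃ (f : W → V) (P : W × W → List V),
    Set.InjOn f {w | w ∈ T.verts} ∧
    (∀ w, T.IsLeaf w → corr w (f w)) ∧
    (∀ e ∈ T.arcs, N.IsPathList (f e.1) (f e.2) (P e) ∧ 2 ≤ (P e).length) ∧
    (∀ e ∈ T.arcs, ∀ x ∈ internalVerts (P e), ∀ w ∈ T.verts, f w ≠ x) ∧
    (∀ e ∈ T.arcs, ∀ e' ∈ T.arcs, e ≠ e' →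
      ∀ x ∈ internalVerts (P e), x ∉ internalVerts (P e'))

/-- `c` is a bijective correspondence between the leaves of `T` and the
leaves of `N` (both leaf sets being labelled by the same taxa set `X`). -/
def LeafCorr {V W : Type} [DecidableEq V] [DecidableEq W]
    (T : Net W) (N : Net V) (c : W → V) : Prop :=
  (∀ w, T.IsLeaf w → N.IsLeaf (c w)) ∧
  (∀ w w', T.IsLeaf w → T.IsLeaf w' → c w = c w' → w = w') ∧
  (∀ v, N.IsLeaf v → ∃ w, T.IsLeaf w ∧ c w = v)

/-- Delete a vertex together with its incident arcs. -/
def Net.delVert {V : Type} [DecidableEq V] (N : Net V) (b : V) : Net V :=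
  ⟨N.verts.erase b, N.arcs.filter (fun e => e.1 ≠ b ∧ e.2 ≠ b), N.root⟩

/-- Contract (suppress) all degree-two vertices (in-degree one and out-degree
one): the remaining vertices are joined by an arc whenever there is a
directed path between them all of whose internal vertices are degree-two.
Since arcs form a `Finset`, any parallel arcs arising are automatically
replaced by a single arc. -/
noncomputable def Net.suppress {V : Type} [DecidableEq V] (N : Net V) :
    Net V where
  verts := N.verts.filter (fun x => ¬ (N.indeg x = 1 ∧ N.outdeg x = 1))
  arcs := by
    classical
    exact (N.verts ×ˢ N.verts).filter (fun e =>
      ¬ (N.indeg e.1 = 1 ∧ N.outdeg e.1 = 1) ∧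
      ¬ (N.indeg e.2 = 1 ∧ N.outdeg e.2 = 1) ∧
      ∃ l : List V, N.IsPathList e.1 e.2 l ∧ 2 ≤ l.length ∧
        ∀ x ∈ (l.drop 1).dropLast, N.indeg x = 1 ∧ N.outdeg x = 1)
  root := N.root

/-!
Let `p` be the common parent of a cherry `{a, b}` and `g` the unique parent of `p` (`tp`, `q` in
`T` and `np`, `gn` in `N`). Deleting `b` and suppressing `p` changes the arcs only by replacing
the path `g → p → a` with an arc `g → a`.

An embedding of `T` into `N` sends `tp` to `np`: otherwise `np`, the only parent of both cherry
leaves of `N`, would be an interior vertex of the disjoint paths for `tp → ta` and `tp → tb`.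
So the path for `q → tp` ends with the arc `gn → np`, and redirecting that arc to `c ta` gives
an embedding of `T'` into `N'`. Conversely, the path for `q → ta` of an embedding of `T'` into
`N'` ends with `gn → c ta`; redirecting it to `np` and adding the arcs `np → c ta`,
`np → c tb` gives an embedding of `T` into `N`.
-/

theorem internalVerts_dropLast_append {α : Type} (l : List α) (x : α) :
    internalVerts (l.dropLast ++ [x]) = internalVerts l := by
  simp only [internalVerts, List.dropLast_drop_eq_drop_dropLast, List.dropLast_concat]

theorem Set.InjOn.update_insert {α β : Type*} [DecidableEq α] {f : α → β} {s : Set α} {a : α}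
    {b : β} (hf : s.InjOn f) (ha : a ∉ s) (hb : ∀ x ∈ s, f x ≠ b) :
    (insert a s).InjOn (Function.update f a b) := by
  have heq : s.EqOn (Function.update f a b) f := fun x hx =>
    Function.update_of_ne (fun (h : x = a) => ha (h ▸ hx)) b f
  rw [Set.injOn_insert ha]
  refine ⟨hf.congr heq.symm, ?_⟩
  rintro ⟨x, hx, hfx⟩
  rw [heq hx, Function.update_self] at hfx
  exact hb x hx hfx

theorem injOn_update_id {α : Type*} [DecidableEq α] {s : Set α} {a b : α} (hb : b ∉ s) :
    s.InjOn (Function.update id a b) := by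
  intro x hx y hy h
  by_cases hxa : x = a <;> by_cases hya : y = a
  · rw [hxa, hya]
  · rw [hxa, Function.update_self, Function.update_of_ne hya] at h
    exact absurd (h ▸ hy) hb
  · rw [hya, Function.update_self, Function.update_of_ne hxa] at h
    exact absurd (h ▸ hx) hb
  · simpa [Function.update_of_ne hxa, Function.update_of_ne hya] using h

namespace Net

variable {M M' : Net V} {a b p g u v x y : V} {l : List V}

namespace IsPathList

theorem ne_nil (h : M.IsPathList u v l) : l ≠ [] := by
  cases h <;> simp

theorem start_mem (h : M.IsPathList u v l) : u ∈ l := by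
  cases h <;> simp

theorem getLast?_eq (h : M.IsPathList u v l) : l.getLast? = some v := by
  induction h with
  | nil => rfl
  | cons _ h ih => rw [List.getLast?_cons, ih]; cases h <;> rfl

theorem end_mem (h : M.IsPathList u v l) : v ∈ l :=
  List.mem_of_getLast? h.getLast?_eq

theorem two_le_length_cons (h : M.IsPathList u v l) : 2 ≤ (x :: l).length :=
  Nat.succ_le_succ (List.length_pos_iff.2 h.ne_nil)

theorem append_singleton (h : M.IsPathList u v l) (hvx : M.Arc v x) :
    M.IsPathList u x (l ++ [x]) := by
  induction h with
  | nil v => exact .cons hvx (.nil x)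
  | cons huw _ ih => exact .cons huw (ih hvx)

theorem mono (h : M.IsPathList u v l) (harc : ∀ x ∈ l, ∀ y ∈ l, M.Arc x y → M'.Arc x y) :
    M'.IsPathList u v l := by
  induction h with
  | nil v => exact .nil v
  | cons huw h ih =>
    exact .cons (harc _ (by simp) _ (by simp [h.start_mem]) huw)
      (ih fun x hx y hy => harc x (by simp [hx]) y (by simp [hy]))

theorem mem_verts (h : M.IsPathList u v l) (hl : 2 ≤ l.length)
    (hverts : ∀ x y, M.Arc x y → x ∈ M.verts ∧ y ∈ M.verts) {z : V} (hz : z ∈ l) :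
    z ∈ M.verts := by
  induction h with
  | nil => simp at hl
  | cons huw h ih =>
    rcases List.mem_cons.1 hz with rfl | hz
    · exact (hverts _ _ huw).1
    · cases h with
      | nil => exact List.mem_singleton.1 hz ▸ (hverts _ _ huw).2
      | cons _ h' => exact ih h'.two_le_length_cons hz

theorem exists_dropLast (h : M.IsPathList u v l) (hl : 2 ≤ l.length) :
    ∃ y, M.Arc y v ∧ M.IsPathList u y l.dropLast := by
  induction h with
  | nil => simp at hl
  | @cons u w v l huw h ih =>
    cases h with
    | nil => exact ⟨u, huw, .nil u⟩
    | cons _ h' =>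
      obtain ⟨y, hyv, hy⟩ := ih h'.two_le_length_cons
      exact ⟨y, hyv, by rw [List.dropLast_cons_of_ne_nil (by simp)]; exact .cons huw hy⟩

theorem dropLast_eq (h : M.IsPathList u v l) (hl : 2 ≤ l.length) :
    l.dropLast = u :: internalVerts l := by
  cases h with
  | nil => simp at hl
  | cons _ h => simp [internalVerts, List.dropLast_cons_of_ne_nil h.ne_nil]

theorem dropLast_append_singleton (h : M.IsPathList u v l) : l.dropLast ++ [v] = l :=
  List.dropLast_append_getLast? v h.getLast?_eq

theorem mem_internalVerts_of_forall_arc_eq (h : M.IsPathList u v l) (hl : 2 ≤ l.length)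
    (hx : ∀ y, M.Arc y v → y = x) (hux : u ≠ x) : x ∈ internalVerts l := by
  obtain ⟨y, hyv, hy⟩ := h.exists_dropLast hl
  have hmem := hy.end_mem
  rw [h.dropLast_eq hl, hx y hyv] at hmem
  exact (List.mem_cons.1 hmem).resolve_left hux.symm

theorem arc_or_of_forall_internalVerts_eq (h : M.IsPathList u v l) (hl : 2 ≤ l.length)
    (hp : ∀ x ∈ internalVerts l, x = p) (hpp : ¬ M.Arc p p) :
    M.Arc u v ∨ (M.Arc u p ∧ M.Arc p v) := by
  cases h with
  | nil => simp at hl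
  | @cons _ w _ _ huw hw =>
    cases hw with
    | nil => exact .inl huw
    | @cons _ w' _ _ hww' hw' =>
      obtain rfl : w = p := hp w
        (by simp [internalVerts, List.dropLast_cons_of_ne_nil hw'.ne_nil])
      cases hw' with
      | nil => exact .inr ⟨huw, hww'⟩
      | cons _ hw'' =>
        obtain rfl : w' = w := hp w'
          (by simp [internalVerts, List.dropLast_cons_of_ne_nil hw''.ne_nil])
        exact absurd hww' hpp

end IsPathList

theorem outdeg_eq_zero_iff : M.outdeg v = 0 ↔ ∀ y, ¬ M.Arc v y := by
  simp only [outdeg, Finset.card_eq_zero, Finset.filter_eq_empty_iff, Prod.forall, Arc]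
  exact ⟨fun h y hy => h v y hy rfl, fun h x y hxy hxv => h y (hxv ▸ hxy)⟩

theorem indeg_eq_zero_iff : M.indeg v = 0 ↔ ∀ x, ¬ M.Arc x v := by
  simp only [indeg, Finset.card_eq_zero, Finset.filter_eq_empty_iff, Prod.forall, Arc]
  exact ⟨fun h x hx => h x v hx rfl, fun h x y hxy hyv => h x (hyv ▸ hxy)⟩

theorem indeg_eq_one_iff : M.indeg v = 1 ↔ ∃ u, M.Arc u v ∧ ∀ x, M.Arc x v → x = u := by
  simp only [indeg, Finset.card_eq_one, Finset.eq_singleton_iff_unique_mem, Finset.mem_filter,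
    Prod.forall, Prod.exists, Arc]
  constructor
  · rintro ⟨u, _, ⟨hu, rfl⟩, h⟩
    exact ⟨u, hu, fun x hx => (Prod.ext_iff.1 (h x _ ⟨hx, rfl⟩)).1⟩
  · rintro ⟨u, hu, h⟩
    exact ⟨u, v, ⟨hu, rfl⟩, fun x y ⟨hxy, hyv⟩ => by subst hyv; rw [h x hxy]⟩

theorem outdeg_eq_one_iff : M.outdeg v = 1 ↔ ∃ y, M.Arc v y ∧ ∀ x, M.Arc v x → x = y := by
  simp only [outdeg, Finset.card_eq_one, Finset.eq_singleton_iff_unique_mem, Finset.mem_filter,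
    Prod.forall, Prod.exists, Arc]
  constructor
  · rintro ⟨_, y, ⟨hy, rfl⟩, h⟩
    exact ⟨y, hy, fun x hx => (Prod.ext_iff.1 (h _ x ⟨hx, rfl⟩)).2⟩
  · rintro ⟨y, hy, h⟩
    exact ⟨v, y, ⟨hy, rfl⟩, fun x z ⟨hxz, hxv⟩ => by subst hxv; rw [h z hxz]⟩

theorem pair_subset_filter_fst_eq (hx : M.Arc v x) (hy : M.Arc v y) :
    {(v, x), (v, y)} ⊆ M.arcs.filter (fun e => e.1 = v) := by
  intro e he
  simp only [Finset.mem_insert, Finset.mem_singleton] at he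
  rcases he with rfl | rfl <;> exact Finset.mem_filter.2 ⟨‹_›, rfl⟩

theorem two_le_outdeg (hx : M.Arc v x) (hy : M.Arc v y) (hxy : x ≠ y) : 2 ≤ M.outdeg v := by
  have hcard : ({(v, x), (v, y)} : Finset (V × V)).card = 2 := Finset.card_pair (by simpa)
  exact hcard ▸ Finset.card_le_card (pair_subset_filter_fst_eq hx hy)

theorem eq_or_eq_of_outdeg_eq_two (h : M.outdeg v = 2) (hx : M.Arc v x) (hy : M.Arc v y)
    (hxy : x ≠ y) {z : V} (hz : M.Arc v z) : z = x ∨ z = y := by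
  have hcard : ({(v, x), (v, y)} : Finset (V × V)).card = 2 := Finset.card_pair (by simpa)
  have heq := Finset.eq_of_subset_of_card_le (pair_subset_filter_fst_eq hx hy)
    (by rw [hcard]; exact h.le)
  have hmem : (v, z) ∈ M.arcs.filter (fun e => e.1 = v) := Finset.mem_filter.2 ⟨hz, rfl⟩
  simpa [← heq] using hmem

theorem arc_delVert_iff : (M.delVert b).Arc x y ↔ M.Arc x y ∧ x ≠ b ∧ y ≠ b := by
  simp [delVert, Arc]

theorem mem_delVert_verts : v ∈ (M.delVert b).verts ↔ v ≠ b ∧ v ∈ M.verts :=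
  Finset.mem_erase

theorem mem_suppress_verts_of_arc (h : M.suppress.Arc x y) :
    x ∈ M.suppress.verts ∧ y ∈ M.suppress.verts := by
  simp only [Arc, suppress, Finset.mem_filter, Finset.mem_product] at h ⊢
  exact ⟨⟨h.1.1, h.2.1⟩, h.1.2, h.2.2.1⟩

namespace IsPhylo

theorem mem_verts_of_arc (hM : M.IsPhylo) (h : M.Arc x y) : x ∈ M.verts ∧ y ∈ M.verts :=
  hM.2.1 _ h

theorem degree_cases (hM : M.IsPhylo) (h : M.arcs.Nonempty) :
    M.indeg M.root = 0 ∧ ∀ v ∈ M.verts, v ≠ M.root →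
      (M.indeg v = 1 ∧ M.outdeg v = 0) ∨
      (M.indeg v = 1 ∧ M.outdeg v = 2) ∨
      (M.indeg v = 2 ∧ M.outdeg v = 1) := by
  obtain ⟨-, -, -, -, hdeg⟩ := hM
  split_ifs at hdeg
  · exact absurd hdeg h.ne_empty
  · exact ⟨hdeg.1, hdeg.2.2⟩

theorem not_indeg_eq_one_and_outdeg_eq_one (hM : M.IsPhylo) (hv : v ∈ M.verts) :
    ¬ (M.indeg v = 1 ∧ M.outdeg v = 1) := by
  rintro ⟨hin, hout⟩
  obtain ⟨u, hu, -⟩ := indeg_eq_one_iff.1 hin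
  obtain ⟨hroot, hdeg⟩ := hM.degree_cases ⟨_, hu⟩
  by_cases hvr : v = M.root
  · subst hvr; omega
  · rcases hdeg v hv hvr with h | h | h <;> omega

theorem exists_arc_to (hM : M.IsPhylo) (hv : v ∈ M.verts) (hvr : v ≠ M.root) :
    ∃ x, M.Arc x v := by
  obtain h | ⟨x, -, hx⟩ := (hM.2.2.2.1 v hv).cases_tail
  exacts [absurd h hvr, ⟨x, hx⟩]

theorem exists_arc_from_root (hM : M.IsPhylo) (hv : v ∈ M.verts) (hvr : v ≠ M.root) :
    ∃ y, M.Arc M.root y := by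
  obtain h | ⟨y, hy, -⟩ := (hM.2.2.2.1 v hv).cases_head
  exacts [absurd h.symm hvr, ⟨y, hy⟩]

end IsPhylo

noncomputable abbrev pruneLeaf (M : Net V) (b : V) : Net V := (M.delVert b).suppress

structure IsCherry (M : Net V) (a b p g : V) : Prop where
  arc_pa : M.Arc p a
  arc_pb : M.Arc p b
  arc_gp : M.Arc g p
  a_ne_b : a ≠ b
  not_arc_a : ∀ y, ¬ M.Arc a y
  not_arc_b : ∀ y, ¬ M.Arc b y
  parent_a : ∀ x, M.Arc x a → x = p
  parent_b : ∀ x, M.Arc x b → x = p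
  parent_p : ∀ x, M.Arc x p → x = g
  child_p : ∀ y, M.Arc p y → y = a ∨ y = b

theorem IsPhylo.exists_isCherry (hM : M.IsPhylo) (ha : M.IsLeaf a) (hb : M.IsLeaf b)
    (hab : a ≠ b) (hpa : M.Arc p a) (hpb : M.Arc p b) (hp : p ≠ M.root) :
    ∃ g, M.IsCherry a b p g := by
  obtain ⟨hroot, hdeg⟩ := hM.degree_cases ⟨_, hpa⟩
  have parent_eq {c : V} (hc : M.IsLeaf c) (hpc : M.Arc p c) : ∀ x, M.Arc x c → x = p := by
    have hcr : c ≠ M.root := by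
      rintro rfl
      exact indeg_eq_zero_iff.1 hroot p hpc
    have hin : M.indeg c = 1 := by
      have := hc.2
      rcases hdeg c hc.1 hcr with h | h | h <;> omega
    obtain ⟨u, -, hu⟩ := indeg_eq_one_iff.1 hin
    exact fun x hx => (hu x hx).trans (hu p hpc).symm
  have hpdeg : M.indeg p = 1 ∧ M.outdeg p = 2 := by
    have := two_le_outdeg hpa hpb hab
    rcases hdeg p (hM.mem_verts_of_arc hpa).1 hp with h | h | h <;> omega
  obtain ⟨g, hg, hgu⟩ := indeg_eq_one_iff.1 hpdeg.1
  exact ⟨g, hpa, hpb, hg, hab, outdeg_eq_zero_iff.1 ha.2, outdeg_eq_zero_iff.1 hb.2,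
    parent_eq ha hpa, parent_eq hb hpb, hgu,
    fun _ hy => eq_or_eq_of_outdeg_eq_two hpdeg.2 hpa hpb hab hy⟩

namespace IsCherry

theorem p_ne_a (hC : M.IsCherry a b p g) : p ≠ a := by
  rintro rfl; exact hC.not_arc_a _ hC.arc_pa

theorem p_ne_b (hC : M.IsCherry a b p g) : p ≠ b := by
  rintro rfl; exact hC.not_arc_b _ hC.arc_pb

theorem not_arc_p_p (hC : M.IsCherry a b p g) : ¬ M.Arc p p := fun h =>
  (hC.child_p p h).elim hC.p_ne_a hC.p_ne_b

theorem g_ne_p (hC : M.IsCherry a b p g) : g ≠ p := by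
  rintro rfl; exact hC.not_arc_p_p hC.arc_gp

theorem g_ne_a (hC : M.IsCherry a b p g) : g ≠ a := by
  rintro rfl; exact hC.not_arc_a _ hC.arc_gp

theorem g_ne_b (hC : M.IsCherry a b p g) : g ≠ b := by
  rintro rfl; exact hC.not_arc_b _ hC.arc_gp

theorem indeg_delVert (hC : M.IsCherry a b p g) (hv : v ≠ b) :
    (M.delVert b).indeg v = M.indeg v := by
  simp only [indeg, delVert, Finset.filter_filter]
  congr 1
  refine Finset.filter_congr fun e he => ⟨fun h => h.2, fun hev => ⟨⟨?_, hev ▸ hv⟩, hev⟩⟩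
  intro h
  exact hC.not_arc_b e.2 (h ▸ he)

theorem outdeg_delVert (hC : M.IsCherry a b p g) (hv : v ≠ p) :
    (M.delVert b).outdeg v = M.outdeg v := by
  simp only [outdeg, delVert, Finset.filter_filter]
  congr 1
  refine Finset.filter_congr fun e he => ⟨fun h => h.2, fun hev => ⟨⟨?_, ?_⟩, hev⟩⟩
  · intro h
    exact hC.not_arc_b e.2 (h ▸ he)
  · intro h
    exact hv (hev ▸ hC.parent_b e.1 (h ▸ he))

theorem indeg_outdeg_delVert_eq_one_iff (hM : M.IsPhylo) (hC : M.IsCherry a b p g) :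
    ((M.delVert b).indeg v = 1 ∧ (M.delVert b).outdeg v = 1) ↔ v = p := by
  constructor
  · intro h
    obtain ⟨x, hx, -⟩ := indeg_eq_one_iff.1 h.1
    obtain ⟨hxv, -, hvb⟩ := arc_delVert_iff.1 hx
    by_contra hvp
    rw [hC.indeg_delVert hvb, hC.outdeg_delVert hvp] at h
    exact hM.not_indeg_eq_one_and_outdeg_eq_one (hM.mem_verts_of_arc hxv).2 h
  · rintro rfl
    refine ⟨indeg_eq_one_iff.2 ⟨g, ?_, ?_⟩, outdeg_eq_one_iff.2 ⟨a, ?_, ?_⟩⟩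
    · exact arc_delVert_iff.2 ⟨hC.arc_gp, hC.g_ne_b, hC.p_ne_b⟩
    · exact fun x hx => hC.parent_p x (arc_delVert_iff.1 hx).1
    · exact arc_delVert_iff.2 ⟨hC.arc_pa, hC.p_ne_b, hC.a_ne_b⟩
    · intro y hy
      obtain ⟨hpy, -, hyb⟩ := arc_delVert_iff.1 hy
      exact (hC.child_p y hpy).resolve_right hyb

theorem mem_pruneLeaf_verts (hM : M.IsPhylo) (hC : M.IsCherry a b p g) :
    v ∈ (M.pruneLeaf b).verts ↔ v ∈ M.verts ∧ v ≠ p ∧ v ≠ b := by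
  simp only [pruneLeaf, suppress, Finset.mem_filter, mem_delVert_verts,
    hC.indeg_outdeg_delVert_eq_one_iff hM]
  tauto

theorem arc_pruneLeaf_iff (hM : M.IsPhylo) (hC : M.IsCherry a b p g) :
    (M.pruneLeaf b).Arc x y ↔ (M.Arc x y ∧ x ≠ p ∧ y ≠ p) ∨ (x = g ∧ y = a) := by
  simp only [Arc, pruneLeaf, suppress, Finset.mem_filter, Finset.mem_product, mem_delVert_verts,
    hC.indeg_outdeg_delVert_eq_one_iff hM]
  constructor
  · rintro ⟨-, hxp, hyp, l, hl, hlen, hint⟩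
    have hpp : ¬ (M.delVert b).Arc p p := fun h => hC.not_arc_p_p (arc_delVert_iff.1 h).1
    rcases hl.arc_or_of_forall_internalVerts_eq hlen hint hpp with h | ⟨hxp', hpy⟩
    · exact .inl ⟨(arc_delVert_iff.1 h).1, hxp, hyp⟩
    · obtain ⟨hpy, -, hyb⟩ := arc_delVert_iff.1 hpy
      exact .inr ⟨hC.parent_p x (arc_delVert_iff.1 hxp').1, (hC.child_p y hpy).resolve_right hyb⟩
  · rintro (⟨hxy, hxp, hyp⟩ | ⟨hxg, hya⟩)
    · have hxb : x ≠ b := fun h => hC.not_arc_b y (h ▸ hxy)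
      have hyb : y ≠ b := fun h => hxp (hC.parent_b x (h ▸ hxy))
      refine ⟨⟨⟨hxb, (hM.mem_verts_of_arc hxy).1⟩, hyb, (hM.mem_verts_of_arc hxy).2⟩, hxp, hyp,
        [x, y], .cons (arc_delVert_iff.2 ⟨hxy, hxb, hyb⟩) (.nil y), le_rfl, by simp⟩
    · rw [hxg, hya]
      refine ⟨⟨⟨hC.g_ne_b, (hM.mem_verts_of_arc hC.arc_gp).1⟩, hC.a_ne_b,
        (hM.mem_verts_of_arc hC.arc_pa).2⟩, hC.g_ne_p, hC.p_ne_a.symm, [g, p, a], ?_, by simp,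
        by simp⟩
      exact .cons (arc_delVert_iff.2 ⟨hC.arc_gp, hC.g_ne_b, hC.p_ne_b⟩)
        (.cons (arc_delVert_iff.2 ⟨hC.arc_pa, hC.p_ne_b, hC.a_ne_b⟩) (.nil a))

theorem arc_of_arc_pruneLeaf (hM : M.IsPhylo) (hC : M.IsCherry a b p g)
    (h : (M.pruneLeaf b).Arc x y) (hne : (x, y) ≠ (g, a)) : M.Arc x y ∧ x ≠ p ∧ y ≠ p :=
  ((hC.arc_pruneLeaf_iff hM).1 h).resolve_right fun ⟨hx, hy⟩ => hne (by rw [hx, hy])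

theorem isLeaf_pruneLeaf_iff (hM : M.IsPhylo) (hC : M.IsCherry a b p g) :
    (M.pruneLeaf b).IsLeaf v ↔ M.IsLeaf v ∧ v ≠ b := by
  simp only [IsLeaf, hC.mem_pruneLeaf_verts hM, outdeg_eq_zero_iff, hC.arc_pruneLeaf_iff hM]
  constructor
  · rintro ⟨⟨hv, hvp, hvb⟩, hout⟩
    refine ⟨⟨hv, fun y hvy => ?_⟩, hvb⟩
    by_cases hyp : y = p
    · exact hout a (.inr ⟨hC.parent_p v (hyp ▸ hvy), rfl⟩)
    · exact hout y (.inl ⟨hvy, hvp, hyp⟩)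
  · rintro ⟨⟨hv, hout⟩, hvb⟩
    have hvp : v ≠ p := fun h => hout a (h ▸ hC.arc_pa)
    refine ⟨⟨hv, hvp, hvb⟩, fun y => ?_⟩
    rintro (⟨hvy, -⟩ | ⟨rfl, -⟩)
    exacts [hout y hvy, hout p hC.arc_gp]

theorem exists_arc_pruneLeaf (hM : M.IsPhylo) (hC : M.IsCherry a b p g)
    (hv : v ∈ (M.pruneLeaf b).verts) :
    ∃ y, (M.pruneLeaf b).Arc v y ∨ (M.pruneLeaf b).Arc y v := by
  obtain ⟨hv, hvp, hvb⟩ := (hC.mem_pruneLeaf_verts hM).1 hv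
  simp only [hC.arc_pruneLeaf_iff hM]
  by_cases hvr : v = M.root
  · obtain ⟨y, hy⟩ := hM.exists_arc_from_root (hM.mem_verts_of_arc hC.arc_pa).1 (hvr ▸ hvp.symm)
    rw [← hvr] at hy
    by_cases hyp : y = p
    · exact ⟨a, .inl (.inr ⟨hC.parent_p v (hyp ▸ hy), rfl⟩)⟩
    · exact ⟨y, .inl (.inl ⟨hy, hvp, hyp⟩)⟩
  · obtain ⟨x, hx⟩ := hM.exists_arc_to hv hvr
    by_cases hxp : x = p
    · exact ⟨g, .inr (.inr ⟨rfl, (hC.child_p v (hxp ▸ hx)).resolve_right hvb⟩)⟩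
    · exact ⟨x, .inr (.inl ⟨hx, hxp, hvp⟩)⟩

theorem isPathList_pruneLeaf (hM : M.IsPhylo) (hC : M.IsCherry a b p g)
    (h : M.IsPathList u v l) (hp : p ∉ l) : (M.pruneLeaf b).IsPathList u v l :=
  h.mono fun _ hx _ hy hxy => (hC.arc_pruneLeaf_iff hM).2
    (.inl ⟨hxy, fun h => hp (h ▸ hx), fun h => hp (h ▸ hy)⟩)

theorem isPathList_of_pruneLeaf (hM : M.IsPhylo) (hC : M.IsCherry a b p g)
    (h : (M.pruneLeaf b).IsPathList u v l) (ha : a ∉ l) : M.IsPathList u v l :=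
  h.mono fun _ _ _ hy hxy => ((hC.arc_pruneLeaf_iff hM).1 hxy).elim (·.1)
    fun h => absurd (h.2 ▸ hy) ha

end IsCherry

end Net

section Embedding

variable {W : Type} [DecidableEq W] {N N₂ : Net V} {T T₂ : Net W} {corr : W → V → Prop}
  {f f₂ : W → V} {P P₂ : W × W → List V}

structure Net.IsEmbedding (N : Net V) (T : Net W) (corr : W → V → Prop) (f : W → V)
    (P : W × W → List V) : Prop where
  injOn : Set.InjOn f {w | w ∈ T.verts}
  corr_apply : ∀ w, T.IsLeaf w → corr w (f w)
  isPathList : ∀ e ∈ T.arcs, N.IsPathList (f e.1) (f e.2) (P e) ∧ 2 ≤ (P e).length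
  apply_ne : ∀ e ∈ T.arcs, ∀ x ∈ internalVerts (P e), ∀ w ∈ T.verts, f w ≠ x
  disjoint : ∀ e ∈ T.arcs, ∀ e' ∈ T.arcs, e ≠ e' →
    ∀ x ∈ internalVerts (P e), x ∉ internalVerts (P e')

theorem Net.displays_iff_exists_isEmbedding :
    N.Displays T corr ↔ ∃ f P, N.IsEmbedding T corr f P :=
  ⟨fun ⟨f, P, h₁, h₂, h₃, h₄, h₅⟩ => ⟨f, P, h₁, h₂, h₃, h₄, h₅⟩,
    fun ⟨f, P, h⟩ => ⟨f, P, h.1, h.2, h.3, h.4, h.5⟩⟩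

namespace Net.IsEmbedding

variable {e : W × W} {w : W}

theorem apply_notMem_dropLast (hE : N.IsEmbedding T corr f P) (he : e ∈ T.arcs)
    (hw : w ∈ T.verts) (he₁ : e.1 ∈ T.verts) (hne : w ≠ e.1) : f w ∉ (P e).dropLast := by
  obtain ⟨hpath, hlen⟩ := hE.isPathList e he
  rw [hpath.dropLast_eq hlen, List.mem_cons, not_or]
  exact ⟨fun h => hne (hE.injOn hw he₁ h), fun h => hE.apply_ne e he _ h w hw rfl⟩

theorem apply_notMem (hE : N.IsEmbedding T corr f P) (he : e ∈ T.arcs)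
    (hw : w ∈ T.verts) (he₁ : e.1 ∈ T.verts) (he₂ : e.2 ∈ T.verts) (hne₁ : w ≠ e.1)
    (hne₂ : w ≠ e.2) : f w ∉ P e := by
  rw [← (hE.isPathList e he).1.dropLast_append_singleton, List.mem_append, not_or,
    List.mem_singleton]
  exact ⟨hE.apply_notMem_dropLast he hw he₁ hne₁, fun h => hne₂ (hE.injOn hw he₂ h)⟩

theorem apply_mem_verts (hE : N.IsEmbedding T corr f P)
    (hN : ∀ x y, N.Arc x y → x ∈ N.verts ∧ y ∈ N.verts) (hw : ∃ y, T.Arc w y ∨ T.Arc y w) :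
    f w ∈ N.verts := by
  obtain ⟨y, he | he⟩ := hw <;> obtain ⟨hpath, hlen⟩ := hE.isPathList _ he
  exacts [hpath.mem_verts hlen hN hpath.start_mem, hpath.mem_verts hlen hN hpath.end_mem]

theorem mem_verts_of_mem_internalVerts (hE : N.IsEmbedding T corr f P)
    (hN : ∀ x y, N.Arc x y → x ∈ N.verts ∧ y ∈ N.verts) (he : e ∈ T.arcs) {x : V}
    (hx : x ∈ internalVerts (P e)) : x ∈ N.verts :=
  (hE.isPathList e he).1.mem_verts (hE.isPathList e he).2 hN
    (List.mem_of_mem_drop (List.mem_of_mem_dropLast hx))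

theorem of_arcMap (hE : N.IsEmbedding T corr f P) (σ : W × W → W × W)
    (hinj : Set.InjOn f₂ {w | w ∈ T₂.verts}) (hcorr : ∀ w, T₂.IsLeaf w → corr w (f₂ w))
    (hpath : ∀ e ∈ T₂.arcs, N₂.IsPathList (f₂ e.1) (f₂ e.2) (P₂ e) ∧ 2 ≤ (P₂ e).length)
    (hσ : ∀ e ∈ T₂.arcs, ∀ x ∈ internalVerts (P₂ e),
      σ e ∈ T.arcs ∧ x ∈ internalVerts (P (σ e)))
    (hσinj : Set.InjOn σ {e | e ∈ T₂.arcs})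
    (hne : ∀ w ∈ T₂.verts, ∀ e ∈ T.arcs, ∀ x ∈ internalVerts (P e), f₂ w ≠ x) :
    N₂.IsEmbedding T₂ corr f₂ P₂ where
  injOn := hinj
  corr_apply := hcorr
  isPathList := hpath
  apply_ne e he x hx w hw := hne w hw _ (hσ e he x hx).1 x (hσ e he x hx).2
  disjoint e he e' he' hee' x hx hx' :=
    hE.disjoint _ (hσ e he x hx).1 _ (hσ e' he' x hx').1 (fun h => hee' (hσinj he he' h)) x
      (hσ e he x hx).2 (hσ e' he' x hx').2

variable {la lb np gn : V} {ta tb tp q : W}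

theorem apply_eq_of_isCherry (hE : N.IsEmbedding T corr f P) (hCN : N.IsCherry la lb np gn)
    (hCT : T.IsCherry ta tb tp q) (hfa : f ta = la) (hfb : f tb = lb) : f tp = np := by
  by_contra hne
  have mem_internal {t : W} {l : V} (ht : T.Arc tp t) (hft : f t = l)
      (hl : ∀ x, N.Arc x l → x = np) : np ∈ internalVerts (P (tp, t)) := by
    obtain ⟨hpath, hlen⟩ := hE.isPathList _ ht
    exact (hft ▸ hpath).mem_internalVerts_of_forall_arc_eq hlen hl hne
  exact hE.disjoint _ hCT.arc_pa _ hCT.arc_pb (by simp [hCT.a_ne_b]) np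
    (mem_internal hCT.arc_pa hfa hCN.parent_a) (mem_internal hCT.arc_pb hfb hCN.parent_b)

theorem exists_isEmbedding_pruneLeaf (hN : N.IsPhylo) (hT : T.IsPhylo)
    (hCN : N.IsCherry la lb np gn) (hCT : T.IsCherry ta tb tp q)
    (hE : N.IsEmbedding T corr f P) (hfa : f ta = la) (hfb : f tb = lb) :
    ∃ P₂, (N.pruneLeaf lb).IsEmbedding (T.pruneLeaf tb) corr f P₂ := by
  have hftp : f tp = np := hE.apply_eq_of_isCherry hCN hCT hfa hfb
  have htp := (hT.mem_verts_of_arc hCT.arc_pa).1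
  obtain ⟨hqtp, hlen⟩ := hE.isPathList _ hCT.arc_gp
  obtain ⟨y, hy, hpre⟩ := hqtp.exists_dropLast hlen
  have hnew : (N.pruneLeaf lb).IsPathList (f q) la ((P (q, tp)).dropLast ++ [la]) := by
    refine (hCN.isPathList_pruneLeaf hN hpre ?_).append_singleton
      ((hCN.arc_pruneLeaf_iff hN).2 (.inr ⟨hCN.parent_p y (hftp ▸ hy), rfl⟩))
    exact hftp ▸ hE.apply_notMem_dropLast hCT.arc_gp htp (hT.mem_verts_of_arc hCT.arc_gp).1
      hCT.g_ne_p.symm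
  refine ⟨Function.update P (q, ta) ((P (q, tp)).dropLast ++ [la]),
    hE.of_arcMap (Function.update id (q, ta) (q, tp)) ?_ ?_ ?_ ?_ (injOn_update_id ?_) ?_⟩
  · exact hE.injOn.mono fun w hw => ((hCT.mem_pruneLeaf_verts hT).1 hw).1
  · exact fun w hw => hE.corr_apply w ((hCT.isLeaf_pruneLeaf_iff hT).1 hw).1
  · rintro ⟨x, y⟩ he
    by_cases hqa : (x, y) = (q, ta)
    · obtain ⟨rfl, rfl⟩ := Prod.mk.inj hqa
      rw [Function.update_self]
      refine ⟨hfa ▸ hnew, ?_⟩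
      simp only [List.length_append, List.length_dropLast, List.length_singleton]
      omega
    · obtain ⟨hxy, hxp, hyp⟩ := hCT.arc_of_arc_pruneLeaf hT he hqa
      rw [Function.update_of_ne hqa]
      refine ⟨hCN.isPathList_pruneLeaf hN (hE.isPathList _ hxy).1 ?_, (hE.isPathList _ hxy).2⟩
      exact hftp ▸ hE.apply_notMem hxy htp (hT.mem_verts_of_arc hxy).1
        (hT.mem_verts_of_arc hxy).2 (Ne.symm hxp) (Ne.symm hyp)
  · rintro ⟨x, y⟩ he z hz
    by_cases hqa : (x, y) = (q, ta)
    · obtain ⟨rfl, rfl⟩ := Prod.mk.inj hqa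
      simp only [Function.update_self, internalVerts_dropLast_append] at hz ⊢
      exact ⟨hCT.arc_gp, hz⟩
    · rw [Function.update_of_ne hqa] at hz ⊢
      exact ⟨(hCT.arc_of_arc_pruneLeaf hT he hqa).1, hz⟩
  · exact fun h => ((hCT.mem_pruneLeaf_verts hT).1 (mem_suppress_verts_of_arc h).2).2.1 rfl
  · exact fun w hw e he x hx => hE.apply_ne e he x hx w ((hCT.mem_pruneLeaf_verts hT).1 hw).1

variable {g : W → V} {Q : W × W → List V}

theorem injOn_update_update_of_pruneLeaf (hN : N.IsPhylo) (hT : T.IsPhylo)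
    (hCN : N.IsCherry la lb np gn) (hCT : T.IsCherry ta tb tp q)
    (hE : (N.pruneLeaf lb).IsEmbedding (T.pruneLeaf tb) corr g Q) :
    Set.InjOn (Function.update (Function.update g tp np) tb lb) {w | w ∈ T.verts} := by
  have hT₂ {w : W} : w ∈ (T.pruneLeaf tb).verts ↔ _ := hCT.mem_pruneLeaf_verts hT
  have hg (w : W) (hw : w ∈ (T.pruneLeaf tb).verts) : g w ≠ np ∧ g w ≠ lb :=
    ((hCN.mem_pruneLeaf_verts hN).1 (hE.apply_mem_verts (fun _ _ h => mem_suppress_verts_of_arc h)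
      (hCT.exists_arc_pruneLeaf hT hw))).2
  have hverts : {w | w ∈ T.verts} = insert tb (insert tp {w | w ∈ (T.pruneLeaf tb).verts}) := by
    ext w
    simp only [Set.mem_insert_iff, Set.mem_ofPred_eq, hT₂]
    constructor
    · intro hw
      tauto
    · rintro (rfl | rfl | ⟨hw, -, -⟩)
      exacts [(hT.mem_verts_of_arc hCT.arc_pb).2, (hT.mem_verts_of_arc hCT.arc_pb).1, hw]
  rw [hverts]
  refine (hE.injOn.update_insert ?_ fun w hw => (hg w hw).1).update_insert ?_ ?_
  · exact fun h => (hT₂.1 h).2.1 rfl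
  · rintro (h | h)
    exacts [hCT.p_ne_b h.symm, (hT₂.1 h).2.2 rfl]
  · rintro w (rfl | hw)
    · rw [Function.update_self]; exact hCN.p_ne_b
    · rw [Function.update_of_ne fun (h : w = tp) => (hT₂.1 (h ▸ hw)).2.1 rfl]
      exact (hg w hw).2

theorem update_update_ne_of_pruneLeaf (hN : N.IsPhylo) (hT : T.IsPhylo)
    (hCN : N.IsCherry la lb np gn) (hCT : T.IsCherry ta tb tp q)
    (hE : (N.pruneLeaf lb).IsEmbedding (T.pruneLeaf tb) corr g Q) :
    ∀ w ∈ T.verts, ∀ e ∈ (T.pruneLeaf tb).arcs, ∀ x ∈ internalVerts (Q e),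
      Function.update (Function.update g tp np) tb lb w ≠ x := by
  intro w hw e he x hx
  have hx₂ := (hCN.mem_pruneLeaf_verts hN).1
    (hE.mem_verts_of_mem_internalVerts (fun _ _ h => mem_suppress_verts_of_arc h) he hx)
  by_cases hwb : w = tb
  · rw [hwb, Function.update_self]; exact fun h => hx₂.2.2 h.symm
  rw [Function.update_of_ne hwb]
  by_cases hwp : w = tp
  · rw [hwp, Function.update_self]; exact fun h => hx₂.2.1 h.symm
  rw [Function.update_of_ne hwp]
  exact hE.apply_ne e he x hx w ((hCT.mem_pruneLeaf_verts hT).2 ⟨hw, hwp, hwb⟩)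

theorem isPathList_dropLast_append_of_pruneLeaf (hN : N.IsPhylo) (hT : T.IsPhylo)
    (hCN : N.IsCherry la lb np gn) (hCT : T.IsCherry ta tb tp q)
    (hE : (N.pruneLeaf lb).IsEmbedding (T.pruneLeaf tb) corr g Q) (hga : g ta = la) :
    N.IsPathList (g q) np ((Q (q, ta)).dropLast ++ [np]) ∧
      2 ≤ ((Q (q, ta)).dropLast ++ [np]).length := by
  have hqta : (T.pruneLeaf tb).Arc q ta := (hCT.arc_pruneLeaf_iff hT).2 (.inr ⟨rfl, rfl⟩)
  obtain ⟨hqa, hlen⟩ := hE.isPathList _ hqta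
  obtain ⟨y, hy, hpre⟩ := hqa.exists_dropLast hlen
  have hyg : y = gn := by
    rcases (hCN.arc_pruneLeaf_iff hN).1 (hga ▸ hy) with ⟨hya, hyp, -⟩ | ⟨hyg, -⟩
    exacts [absurd (hCN.parent_a y hya) hyp, hyg]
  have hla : la ∉ (Q (q, ta)).dropLast := hga ▸ hE.apply_notMem_dropLast hqta
    (mem_suppress_verts_of_arc hqta).2 (mem_suppress_verts_of_arc hqta).1 hCT.g_ne_a.symm
  refine ⟨(hCN.isPathList_of_pruneLeaf hN hpre hla).append_singleton (hyg ▸ hCN.arc_gp), ?_⟩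
  simp only [List.length_append, List.length_dropLast, List.length_singleton]
  omega

theorem isPathList_of_pruneLeaf_of_ne (hN : N.IsPhylo) (hT : T.IsPhylo)
    (hCN : N.IsCherry la lb np gn) (hCT : T.IsCherry ta tb tp q)
    (hE : (N.pruneLeaf lb).IsEmbedding (T.pruneLeaf tb) corr g Q) (hga : g ta = la)
    {x y : W} (hxy : T.Arc x y) (hxp : x ≠ tp) (hyp : y ≠ tp) :
    N.IsPathList (g x) (g y) (Q (x, y)) ∧ 2 ≤ (Q (x, y)).length := by
  have he : (T.pruneLeaf tb).Arc x y := (hCT.arc_pruneLeaf_iff hT).2 (.inl ⟨hxy, hxp, hyp⟩)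
  have hta : ta ∈ (T.pruneLeaf tb).verts := (hCT.mem_pruneLeaf_verts hT).2
    ⟨(hT.mem_verts_of_arc hCT.arc_pa).2, hCT.p_ne_a.symm, hCT.a_ne_b⟩
  have hla : la ∉ Q (x, y) := hga ▸ hE.apply_notMem he hta (mem_suppress_verts_of_arc he).1
    (mem_suppress_verts_of_arc he).2 (fun h => hCT.not_arc_a y (h ▸ hxy))
    (fun h => hxp (hCT.parent_a x (h ▸ hxy)))
  exact ⟨hCN.isPathList_of_pruneLeaf hN (hE.isPathList _ he).1 hla, (hE.isPathList _ he).2⟩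

theorem exists_isEmbedding_of_pruneLeaf (hN : N.IsPhylo) (hT : T.IsPhylo)
    (hCN : N.IsCherry la lb np gn) (hCT : T.IsCherry ta tb tp q)
    (hE : (N.pruneLeaf lb).IsEmbedding (T.pruneLeaf tb) corr g Q) (hga : g ta = la)
    (hcorr : corr tb lb) : ∃ f P, N.IsEmbedding T corr f P := by
  set f := Function.update (Function.update g tp np) tb lb with hf
  have hf_tb : f tb = lb := Function.update_self ..
  have hf_tp : f tp = np := by rw [hf, Function.update_of_ne hCT.p_ne_b, Function.update_self]
  have hf_eq (w : W) (hwp : w ≠ tp) (hwb : w ≠ tb) : f w = g w := by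
    rw [hf, Function.update_of_ne hwb, Function.update_of_ne hwp]
  refine ⟨f, fun e => if e.1 = tp then [f e.1, f e.2]
      else Function.update Q (q, tp) ((Q (q, ta)).dropLast ++ [np]) e,
    hE.of_arcMap (Function.update id (q, tp) (q, ta))
      (injOn_update_update_of_pruneLeaf hN hT hCN hCT hE) ?_ ?_ ?_
      (injOn_update_id fun h => hCT.g_ne_p (hCT.parent_a q h))
      (update_update_ne_of_pruneLeaf hN hT hCN hCT hE)⟩
  · intro w hw
    by_cases hwb : w = tb
    · rw [hwb, hf_tb]; exact hcorr
    have hwp : w ≠ tp := fun h => outdeg_eq_zero_iff.1 hw.2 ta (h ▸ hCT.arc_pa)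
    rw [hf_eq w hwp hwb]
    exact hE.corr_apply w ((hCT.isLeaf_pruneLeaf_iff hT).2 ⟨hw, hwb⟩)
  · rintro ⟨x, y⟩ (he : T.Arc x y)
    by_cases hxp : x = tp
    · subst hxp
      rw [if_pos rfl]
      refine ⟨.cons ?_ (.nil _), le_rfl⟩
      rw [hf_tp]
      rcases hCT.child_p y he with hya | hyb
      · rw [hya, hf_eq ta hCT.p_ne_a.symm hCT.a_ne_b, hga]; exact hCN.arc_pa
      · rw [hyb, hf_tb]; exact hCN.arc_pb
    rw [if_neg hxp]
    by_cases hyp : y = tp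
    · subst hyp
      obtain rfl := hCT.parent_p x he
      rw [Function.update_self, hf_eq x hCT.g_ne_p hCT.g_ne_b, hf_tp]
      exact isPathList_dropLast_append_of_pruneLeaf hN hT hCN hCT hE hga
    rw [Function.update_of_ne fun h => hyp (Prod.mk.inj h).2,
      hf_eq x hxp fun h => hCT.not_arc_b y (h ▸ he),
      hf_eq y hyp fun h => hxp (hCT.parent_b x (h ▸ he))]
    exact isPathList_of_pruneLeaf_of_ne hN hT hCN hCT hE hga he hxp hyp
  · rintro ⟨x, y⟩ (he : T.Arc x y) z hz
    by_cases hxp : x = tp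
    · simp [hxp, internalVerts] at hz
    rw [if_neg hxp] at hz
    by_cases hyp : y = tp
    · subst hyp
      obtain rfl := hCT.parent_p x he
      simp only [Function.update_self, internalVerts_dropLast_append] at hz ⊢
      exact ⟨(hCT.arc_pruneLeaf_iff hT).2 (.inr ⟨rfl, rfl⟩), hz⟩
    rw [Function.update_of_ne fun h => hyp (Prod.mk.inj h).2] at hz ⊢
    exact ⟨(hCT.arc_pruneLeaf_iff hT).2 (.inl ⟨he, hxp, hyp⟩), hz⟩

end Net.IsEmbedding

end Embedding

theorem stmt_6_general {V W : Type} [DecidableEq V] [DecidableEq W]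
    (N : Net V) (T : Net W) (c : W → V)
    (hN : N.IsPhylo) (hT : T.IsPhylo)
    (hc : LeafCorr T N c)
    (ta tb tp : W) (np : V)
    (hta : T.IsLeaf ta) (htb : T.IsLeaf tb) (htab : ta ≠ tb)
    (htpa : T.Arc tp ta) (htpb : T.Arc tp tb)
    (hnpa : N.Arc np (c ta)) (hnpb : N.Arc np (c tb))
    (htproot : tp ≠ T.root) (hnproot : np ≠ N.root) :
    N.Displays T (fun w x => x = c w) ↔
      ((N.delVert (c tb)).suppress).Displays
        ((T.delVert tb).suppress) (fun w x => x = c w) := by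
  obtain ⟨gn, hCN⟩ := hN.exists_isCherry (hc.1 ta hta) (hc.1 tb htb)
    (fun h => htab (hc.2.1 ta tb hta htb h)) hnpa hnpb hnproot
  obtain ⟨q, hCT⟩ := hT.exists_isCherry hta htb htab htpa htpb htproot
  simp only [Net.displays_iff_exists_isEmbedding]
  constructor
  · rintro ⟨f, P, hE⟩
    exact ⟨f, hE.exists_isEmbedding_pruneLeaf hN hT hCN hCT (hE.corr_apply ta hta)
      (hE.corr_apply tb htb)⟩
  · rintro ⟨g, Q, hE⟩
    exact hE.exists_isEmbedding_of_pruneLeaf hN hT hCN hCT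
      (hE.corr_apply ta ((hCT.isLeaf_pruneLeaf_iff hT).2 ⟨hta, htab⟩)) rfl

/-- Let `{a, b}` be a cherry of the rooted binary phylogenetic `X`-tree `T`
(leaves `ta, tb` with common parent `tp`) which is also a cherry of the
phylogenetic network `N` (the corresponding leaves `c ta, c tb` have common
parent `np`), and let `N'` and `T'` be obtained from `N` and `T` by deleting
leaf `b` with its incident arc and contracting the resulting degree-two
vertex.  Then `N` displays `T` if and only if `N'` displays `T'`. -/
theorem stmt_6 {V W : Type} [DecidableEq V] [DecidableEq W]
    (N : Net V) (T : Net W) (c : W → V)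
    (hN : N.IsPhylo) (hT : T.IsPhylo) (hTtree : T.retics = ∅)
    (hc : LeafCorr T N c)
    (ta tb tp : W) (np : V)
    (hta : T.IsLeaf ta) (htb : T.IsLeaf tb) (htab : ta ≠ tb)
    (htpa : T.Arc tp ta) (htpb : T.Arc tp tb)
    (hnpa : N.Arc np (c ta)) (hnpb : N.Arc np (c tb))
    (htproot : tp ≠ T.root) (hnproot : np ≠ N.root) :
    N.Displays T (fun w x => x = c w) ↔
      ((N.delVert (c tb)).suppress).Displays
        ((T.delVert tb).suppress) (fun w x => x = c w) :=
  stmt_6_general N T c hN hT hc ta tb tp np hta htb htab htpa htpb hnpa hnpb htproot hnproot
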